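/- arXiv:2411.18137 — 2 statements merged into one kernel-verified Lean document; each statement's English description precedes it below -/
import Mathlib

section
/- With the above construction, let j ∈ {1,…,T−1} and let C be a configuration of M at time step j whose state q ∉ F and whose head is at cell 1 (reading $), with tape contents $ a₂ ⋯ a_T, and set W' = val(C)·B^{(T−j)·T}. Then c_left(q, a₂, j) ≤ W', and c_left(q, a₂, j) is the largest coin in 𝒞 not exceeding W'; hence it is the coin selected by the greedy procedure at remaining amount W'. -/
/-- A deterministic single-tape Turing machine with a left endmarker `dollar` and a
blank symbol `blank`.  In the transition function, the direction `true` means the head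
moves one cell to the right and `false` means one cell to the left. -/
structure TM (Q Γ : Type*) where
  δ : Q → Γ → Q × Γ × Bool
  q₀ : Q
  qacc : Q
  qrej : Q
  dollar : Γ
  blank : Γ

namespace TM

variable {Q Γ : Type*} [DecidableEq Q] [DecidableEq Γ]

/-- `q` is a halting state. -/
def Halting (M : TM Q Γ) (q : Q) : Prop := q = M.qacc ∨ q = M.qrej

instance (M : TM Q Γ) (q : Q) : Decidable (M.Halting q) := by
  unfold Halting; infer_instance

/-- One step of the machine on a configuration `(state, head position, tape contents)`;
halting configurations are fixed points (so this computes `Δ(C)`). -/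
def step (M : TM Q Γ) (c : Q × ℕ × (ℕ → Γ)) : Q × ℕ × (ℕ → Γ) :=
  if M.Halting c.1 then c
  else
    let r := M.δ c.1 (c.2.2 c.2.1)
    (r.1, if r.2.2 then c.2.1 + 1 else c.2.1 - 1, Function.update c.2.2 c.2.1 r.2.1)

/-- The initial configuration on input `x` of length `n`: state `q₀`, head on cell `1`,
the left endmarker in cell `1`, the input symbols `x 1, …, x n` in cells `2, …, n+1`,
and blanks beyond. -/
def init (M : TM Q Γ) (x : ℕ → Γ) (n : ℕ) : Q × ℕ × (ℕ → Γ) :=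
  (M.q₀, 1, fun r => if r = 1 then M.dollar else if r ≤ n + 1 then x (r - 1) else M.blank)

/-- The numeric encoding of a configuration in base `B` with `T` tape cells:
`val(C) = Σ_{r ≠ h} g(a_r)·B^(T−r) + (f(q)·k + g(a_h))·B^(T−h)`. -/
def val (f : Q → ℕ) (g : Γ → ℕ) (k B T : ℕ) (c : Q × ℕ × (ℕ → Γ)) : ℕ :=
  ∑ r ∈ Finset.Icc 1 T,
    (if r = c.2.1 then f c.1 * k + g (c.2.2 r) else g (c.2.2 r)) * B ^ (T - r)

/-- `B^((T−j−1)·T)`, interpreted as `0` when `j = T` (or beyond). -/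
def low (B T j : ℕ) : ℕ := if j < T then B ^ ((T - j - 1) * T) else 0

/-- Copy coin `c_copy(a, i, j)`. -/
def cCopy (g : Γ → ℕ) (B T : ℕ) (a : Γ) (i j : ℕ) : ℕ :=
  g a * B ^ (T - i) * B ^ ((T - j) * T) - g a * B ^ (T - i) * low B T j

/-- The higher-range part of a transition coin: digits `a⁻ (q a) a⁺` at positions
`i−1, i, i+1`. -/
def transUpper (f : Q → ℕ) (g : Γ → ℕ) (k B T : ℕ) (q : Q) (am a ap : Γ) (i : ℕ) : ℕ :=
  g am * B ^ (T - i + 1) + (f q * k + g a) * B ^ (T - i) + g ap * B ^ (T - i - 1)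

/-- The lower-range update `s'` of a transition coin. -/
def transLower (M : TM Q Γ) (f : Q → ℕ) (g : Γ → ℕ) (k B T : ℕ) (q : Q) (am a ap : Γ)
    (i : ℕ) : ℕ :=
  if M.Halting q then transUpper f g k B T q am a ap i
  else
    let r := M.δ q a
    if r.2.2 then
      g am * B ^ (T - i + 1) + g r.2.1 * B ^ (T - i) + (f r.1 * k + g ap) * B ^ (T - i - 1)
    else
      (f r.1 * k + g am) * B ^ (T - i + 1) + g r.2.1 * B ^ (T - i) + g ap * B ^ (T - i - 1)

/-- Transition coin `c_trans(q, a⁻, a, a⁺, i, j)`. -/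
def cTrans (M : TM Q Γ) (f : Q → ℕ) (g : Γ → ℕ) (k B T : ℕ) (q : Q) (am a ap : Γ)
    (i j : ℕ) : ℕ :=
  transUpper f g k B T q am a ap i * B ^ ((T - j) * T)
    - transLower M f g k B T q am a ap i * low B T j

/-- Left-end transition coin `c_left(q, a⁺, j)` (with `δ(q, $) = (q', $, R)`). -/
def cLeft (M : TM Q Γ) (f : Q → ℕ) (g : Γ → ℕ) (k B T : ℕ) (q : Q) (ap : Γ) (j : ℕ) : ℕ :=
  ((f q * k + g M.dollar) * B ^ (T - 1) + g ap * B ^ (T - 2)) * B ^ ((T - j) * T)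
    - (g M.dollar * B ^ (T - 1) + (f (M.δ q M.dollar).1 * k + g ap) * B ^ (T - 2)) * low B T j

/-- The coin set `𝒞` of the greedy coin change instance: all copy coins, transition
coins, and left-end transition coins with parameters in the prescribed ranges. -/
def coinSet (M : TM Q Γ) (f : Q → ℕ) (g : Γ → ℕ) (k B T : ℕ) : Set ℕ :=
  {c | (∃ a i j, 1 ≤ i ∧ i ≤ T ∧ 1 ≤ j ∧ j ≤ T ∧ c = cCopy g B T a i j) ∨
       (∃ q am a ap i j, 2 ≤ i ∧ i ≤ T - 1 ∧ 1 ≤ j ∧ j ≤ T ∧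
          c = cTrans M f g k B T q am a ap i j) ∨
       (∃ q ap j, ¬ M.Halting q ∧ 1 ≤ j ∧ j ≤ T ∧ c = cLeft M f g k B T q ap j)}

end TM

/-- The coin selected by the greedy procedure at remaining amount `w`: the largest coin
of `𝒞` not exceeding `w` (and `0` if no coin fits). -/
noncomputable def greedyPick (𝒞 : Set ℕ) (w : ℕ) : ℕ := sSup {c ∈ 𝒞 | c ≤ w}

/-- The remaining change amount after `t` steps of the greedy procedure starting from `W`. -/
noncomputable def greedyRem (𝒞 : Set ℕ) (W : ℕ) : ℕ → ℕ
  | 0 => W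
  | t + 1 => greedyRem 𝒞 W t - greedyPick 𝒞 (greedyRem 𝒞 W t)

private lemma twoDigit_lt (B E d1 d2 : ℕ) (hE : 1 ≤ E) (h1 : d1 + 2 ≤ B) (h2 : d2 + 2 ≤ B) :
    d1 * (E * B) + d2 * E + E + 1 ≤ E * B * B := by
  nlinarith [Nat.mul_le_mul_right (E * B) h1, Nat.mul_le_mul_right E h2, hE,
    Nat.zero_le (E * B)]

private lemma threeDigit_le (B p d1 d2 d3 : ℕ) (hp : 1 ≤ p) (hB : 1 ≤ B)
    (h1 : d1 + 2 ≤ B) (h2 : d2 + 2 ≤ B) (h3 : d3 + 2 ≤ B) :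
    d1 * (p * B * B) + d2 * (p * B) + d3 * p ≤ p * B * B * B := by
  nlinarith [Nat.mul_le_mul_right (p * B * B) h1, Nat.mul_le_mul_right (p * B) h2,
    Nat.mul_le_mul_right p h3, Nat.zero_le (p * B), Nat.zero_le (p * B * B)]

private lemma upper_le (B p k d1 d2 d3 : ℕ) (hp : 1 ≤ p) (h1 : d1 ≤ k)
    (h2 : d2 + 2 ≤ B) (h3 : d3 + 2 ≤ B) :
    d1 * (p * B * B) + d2 * (p * B) + d3 * p + 1 ≤ (k + 1) * (p * B * B) := by
  nlinarith [Nat.mul_le_mul_right (p * B * B) h1, Nat.mul_le_mul_right (p * B) h2,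
    Nat.mul_le_mul_right p h3, Nat.zero_le (p * B), hp]

private lemma geomAux (B : ℕ) (hB : 1 ≤ B) (n : ℕ) :
    (∑ m ∈ Finset.range n, (B - 1) * B ^ m) + 1 = B ^ n := by
  induction n with
  | zero => simp
  | succ n ih =>
    rw [Finset.sum_range_succ, pow_succ]
    have h1 : 1 ≤ B ^ n := Nat.one_le_pow _ _ hB
    have h2 : (B - 1) * B ^ n = B * B ^ n - B ^ n := by rw [Nat.sub_mul, one_mul]
    have h3 : B ^ n ≤ B * B ^ n := Nat.le_mul_of_pos_left _ hB
    have h4 : B ^ n * B = B * B ^ n := mul_comm _ _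
    omega

private lemma digitSumAux (B T u : ℕ) (hB : 1 ≤ B) (d : ℕ → ℕ) (hd : ∀ r, d r + 1 ≤ B) :
    (∑ r ∈ Finset.Icc u T, d r * B ^ (T - r)) + 1 ≤ B ^ (T + 1 - u) := by
  have h1 : (∑ r ∈ Finset.Icc u T, d r * B ^ (T - r)) ≤
      ∑ r ∈ Finset.Icc u T, (B - 1) * B ^ (T - r) := by
    refine Finset.sum_le_sum fun r _ => Nat.mul_le_mul_right _ ?_
    have := hd r; omega
  have h2 : ∑ r ∈ Finset.Icc u T, (B - 1) * B ^ (T - r)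
      = ∑ m ∈ Finset.range (T + 1 - u), (B - 1) * B ^ m := by
    refine Finset.sum_nbij' (fun r => T - r) (fun m => T - m) ?_ ?_ ?_ ?_ ?_
    · intro r hr; simp only [Finset.mem_Icc] at hr; simp only [Finset.mem_range]; omega
    · intro m hm; simp only [Finset.mem_range] at hm; simp only [Finset.mem_Icc]; omega
    · intro r hr; simp only [Finset.mem_Icc] at hr; omega
    · intro m hm; simp only [Finset.mem_range] at hm; omega
    · intro r hr; rfl
  have h3 := geomAux B hB (T + 1 - u)
  omega

private lemma coin_gt (BT P' lo X val u l c : ℕ) (hc : u * (BT * P') - l * lo ≤ c)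
    (hlo : lo ≤ P') (hXP : X ≤ P') (hX1 : 1 ≤ X) (hcond : val + 1 + l ≤ u * BT) :
    val * X < c := by
  have h1 : l * lo ≤ l * P' := Nat.mul_le_mul_left _ hlo
  have h2 : u * (BT * P') = (u * BT) * P' := by ring
  have h4 : (val + 1 + l) * P' ≤ (u * BT) * P' := Nat.mul_le_mul_right _ hcond
  have h5 : (val + 1 + l) * P' = (val + 1) * P' + l * P' := by ring
  have h6 : (val + 1) * X ≤ (val + 1) * P' := Nat.mul_le_mul_left _ hXP
  have h7 : (val + 1) * X = val * X + X := by ring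
  omega

private lemma coin_le_of (u P X A D Y c : ℕ) (hc : c ≤ u * P) (hP : P ≤ X)
    (hu : u + 1 ≤ A) (hD : D * Y + Y ≤ X) (hY1 : 1 ≤ Y) :
    c ≤ A * X - D * Y := by
  have h1 : u * P ≤ u * X := Nat.mul_le_mul_left _ hP
  have h2 : (u + 1) * X ≤ A * X := Nat.mul_le_mul_right _ hu
  have h3 : (u + 1) * X = u * X + X := by ring
  omega

private lemma coin_le_of2 (u P X A D Y BT c : ℕ) (hc : c ≤ u * P) (hP : P ≤ Y)
    (hu : u + 1 ≤ BT) (hXY : X = BT * Y) (hA : 2 ≤ A) (hD : D * Y + Y ≤ X) :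
    c ≤ A * X - D * Y := by
  have h1 : u * P ≤ u * Y := Nat.mul_le_mul_left _ hP
  have h2 : (u + 1) * Y ≤ BT * Y := Nat.mul_le_mul_right _ hu
  have h3 : (u + 1) * Y = u * Y + Y := by ring
  have h4 : 2 * X ≤ A * X := Nat.mul_le_mul_right _ hA
  omega

/-- Case (1) of the simulation: at a remaining amount encoding a configuration with a
non-halting state `q` and head on cell `1` (reading `$`) at time step `j ≤ T−1`, the
left-end transition coin `c_left(q, a₂, j)` does not exceed `W'` and is the largest coin
of `𝒞` not exceeding `W'`; hence it is the coin selected by the greedy procedure. -/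
theorem leftEnd_coin_is_greedy_choice
    {Q Γ : Type*} [Fintype Q] [Fintype Γ] [DecidableEq Q] [DecidableEq Γ]
    (M : TM Q Γ) (f : Q → ℕ) (g : Γ → ℕ) (s k B T : ℕ)
    (hs : s = Fintype.card Q) (hk : k = Fintype.card Γ)
    (hfr : ∀ q, 1 ≤ f q ∧ f q ≤ s) (hgr : ∀ a, 1 ≤ g a ∧ g a ≤ k)
    (hfi : Function.Injective f) (hgi : Function.Injective g)
    (hB : (s + 1) * k + 2 ≤ B)
    (hdollar : ∀ q, (M.δ q M.dollar).2.1 = M.dollar ∧ (M.δ q M.dollar).2.2 = true)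
    (q : Q) (hq : ¬ M.Halting q) (j : ℕ) (hj1 : 1 ≤ j) (hjT : j ≤ T - 1)
    (a : ℕ → Γ) (ha1 : a 1 = M.dollar)
    (W' : ℕ) (hW' : W' = TM.val f g k B T (q, 1, a) * B ^ ((T - j) * T)) :
    TM.cLeft M f g k B T q (a 2) j ≤ W' ∧
    IsGreatest {c | c ∈ TM.coinSet M f g k B T ∧ c ≤ W'} (TM.cLeft M f g k B T q (a 2) j) ∧
    greedyPick (TM.coinSet M f g k B T) W' = TM.cLeft M f g k B T q (a 2) j := by
    -- basic numeric facts
  have hs1 : 1 ≤ s := le_trans (hfr q).1 (hfr q).2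
  have hk1 : 1 ≤ k := le_trans (hgr M.dollar).1 (hgr M.dollar).2
  have hB4 : 4 ≤ B := by nlinarith
  have hB1 : 1 ≤ B := by omega
  have hB0 : 0 < B := by omega
  have hT2 : 2 ≤ T := by omega
  have hjT' : j < T := by omega
  have hdig : ∀ (q' : Q) (a' : Γ), f q' * k + g a' + 2 ≤ B := by
    intro q' a'
    have h1 : f q' * k ≤ s * k := Nat.mul_le_mul_right _ (hfr q').2
    have h2 := (hgr a').2
    nlinarith
  have hgB : ∀ a' : Γ, g a' + 2 ≤ B := by
    intro a'
    have h2 := (hgr a').2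
    nlinarith
  -- power facts
  have hE1 : 1 ≤ B ^ (T - 2) := Nat.one_le_pow _ _ hB0
  have hp1 : B ^ (T - 1) = B ^ (T - 2) * B := by
    rw [← pow_succ]; congr 1; omega
  have hpT : B ^ T = B ^ (T - 2) * B * B := by
    rw [← pow_succ, ← pow_succ]; congr 1; omega
  have hE1' : 1 ≤ B ^ (T - 1) := Nat.one_le_pow _ _ hB0
  have hBT2 : B * B ≤ B ^ T := by
    calc B * B = 1 * (B * B) := by ring
      _ ≤ B ^ (T - 2) * (B * B) := Nat.mul_le_mul_right _ hE1
      _ = B ^ (T - 2) * B * B := by ring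
      _ = B ^ T := hpT.symm
  set X := B ^ ((T - j) * T) with hXdef
  set Y := B ^ ((T - j - 1) * T) with hYdef
  set V := TM.val f g k B T (q, 1, a) with hVdef
  subst hW'
  have hX1 : 1 ≤ X := Nat.one_le_pow _ _ hB0
  have hY1 : 1 ≤ Y := Nat.one_le_pow _ _ hB0
  have hPsplit : ∀ j'', j'' < T →
      B ^ ((T - j'') * T) = B ^ T * B ^ ((T - j'' - 1) * T) := by
    intro j'' h
    have e : (T - j'') * T = T + (T - j'' - 1) * T := by
      obtain ⟨m, hm⟩ : ∃ m, T - j'' - 1 = m := ⟨_, rfl⟩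
      have e2 : T - j'' = m + 1 := by omega
      rw [hm, e2]; ring
    rw [e, pow_add]
  have hXY : X = B ^ T * Y := hPsplit j hjT'
  have hlo : ∀ j'', TM.low B T j'' ≤ B ^ ((T - j'' - 1) * T) := by
    intro j''
    rw [TM.low]; split
    · exact le_refl _
    · exact Nat.zero_le _
  have hlowj : TM.low B T j = Y := by rw [TM.low, if_pos hjT']
  set A := (f q * k + g M.dollar) * B ^ (T - 1) + g (a 2) * B ^ (T - 2) with hAdef
  set D := g M.dollar * B ^ (T - 1) +
    (f (M.δ q M.dollar).1 * k + g (a 2)) * B ^ (T - 2) with hDdef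
  have hcoin : TM.cLeft M f g k B T q (a 2) j = A * X - D * Y := by
    rw [TM.cLeft, hlowj, hAdef, hDdef, hXdef]
  -- bounds on A and D
  have hkB : k + 2 ≤ B := by
    have := Nat.le_mul_of_pos_left k (show 0 < s + 1 by omega)
    omega
  have hA_lb : (k + 1) * B ^ (T - 1) + 1 ≤ A := by
    rw [hAdef]
    have h1 : k + 1 ≤ f q * k + g M.dollar := by
      have h2 : 1 * k ≤ f q * k := Nat.mul_le_mul_right _ (hfr q).1
      have h3 := (hgr M.dollar).1
      omega
    have h2 : (k + 1) * B ^ (T - 1) ≤ (f q * k + g M.dollar) * B ^ (T - 1) :=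
      Nat.mul_le_mul_right _ h1
    have h3 : 1 * 1 ≤ g (a 2) * B ^ (T - 2) :=
      Nat.mul_le_mul (hgr (a 2)).1 hE1
    omega
  have hkB1 : (k + 1) * B ^ (T - 1) ≤ B ^ T := by
    rw [hp1, hpT]
    calc (k + 1) * (B ^ (T - 2) * B) ≤ B * (B ^ (T - 2) * B) :=
          Nat.mul_le_mul_right _ (by omega)
      _ = B ^ (T - 2) * B * B := by ring
  have hA2 : 2 ≤ A := by
    have h1 : 2 * 1 ≤ (k + 1) * B ^ (T - 1) := Nat.mul_le_mul (by omega) hE1'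
    omega
  have hlB : ∀ (q'' : Q) (ap' : Γ),
      g M.dollar * B ^ (T - 1) + (f q'' * k + g ap') * B ^ (T - 2) + 1 ≤ B ^ T := by
    intro q'' ap'
    rw [hp1, hpT]
    have := twoDigit_lt B (B ^ (T - 2)) (g M.dollar) (f q'' * k + g ap') hE1
      (hgB M.dollar) (hdig q'' ap')
    omega
  have huB : ∀ (q'' : Q) (ap' : Γ),
      (f q'' * k + g M.dollar) * B ^ (T - 1) + g ap' * B ^ (T - 2) + B ^ (T - 2) + 1
        ≤ B ^ T := by
    intro q'' ap'
    rw [hp1, hpT]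
    have := twoDigit_lt B (B ^ (T - 2)) (f q'' * k + g M.dollar) (g ap') hE1
      (hdig q'' M.dollar) (hgB ap')
    omega
  have hDX : D * Y + Y ≤ X := by
    have h1 : D + 1 ≤ B ^ T := by rw [hDdef]; exact hlB _ _
    calc D * Y + Y = (D + 1) * Y := by ring
      _ ≤ B ^ T * Y := Nat.mul_le_mul_right _ h1
      _ = X := hXY.symm
  -- value decomposition
  have hsplit : Finset.Icc 1 T = insert 1 (insert 2 (Finset.Icc 3 T)) := by
    ext r; simp only [Finset.mem_insert, Finset.mem_Icc]; omega
  have hVeq : V = A + ∑ r ∈ Finset.Icc 3 T, g (a r) * B ^ (T - r) := by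
    rw [hVdef, TM.val, hsplit, Finset.sum_insert
      (by simp only [Finset.mem_insert, Finset.mem_Icc]; omega),
      Finset.sum_insert (by simp only [Finset.mem_Icc]; omega)]
    dsimp only
    rw [if_pos rfl, if_neg (by omega), ha1]
    have hsum3 : ∑ r ∈ Finset.Icc 3 T,
        (if r = 1 then f q * k + g (a r) else g (a r)) * B ^ (T - r)
        = ∑ r ∈ Finset.Icc 3 T, g (a r) * B ^ (T - r) := by
      refine Finset.sum_congr rfl fun r hr => ?_
      simp only [Finset.mem_Icc] at hr
      rw [if_neg (by omega)]
    rw [hsum3, hAdef]; ring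
  have hS_ub : (∑ r ∈ Finset.Icc 3 T, g (a r) * B ^ (T - r)) + 1 ≤ B ^ (T - 2) := by
    have h := digitSumAux B T 3 hB1 (fun r => g (a r))
      (fun r => by show g (a r) + 1 ≤ B; have := hgB (a r); omega)
    have e : T + 1 - 3 = T - 2 := by omega
    rw [e] at h
    exact h
  have hval_lb : A ≤ V := by rw [hVeq]; omega
  have hval_ub : V + 1 ≤ A + B ^ (T - 2) := by rw [hVeq]; omega
  have hvalB : V + 2 ≤ B ^ T := by
    have hAE : A + B ^ (T - 2) + 1 ≤ B ^ T := by rw [hAdef]; exact huB q (a 2)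
    omega
  -- part 1
  have h1 : TM.cLeft M f g k B T q (a 2) j ≤ V * X := by
    rw [hcoin]
    calc A * X - D * Y ≤ A * X := Nat.sub_le _ _
      _ ≤ V * X := Nat.mul_le_mul_right _ hval_lb
  have h2 : TM.cLeft M f g k B T q (a 2) j ∈ TM.coinSet M f g k B T :=
    Or.inr (Or.inr ⟨q, a 2, j, hq, hj1, by omega, rfl⟩)
  -- part 2 : maximality
  have h3 : ∀ c, c ∈ TM.coinSet M f g k B T → c ≤ V * X →
      c ≤ TM.cLeft M f g k B T q (a 2) j := by
    intro c hc hcW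
    rw [hcoin]
    rcases hc with ⟨a', i, j', hi1, hiT, hj'1, hj'T, hceq⟩ | hc'
    · -- copy coin
      have hu1 : 1 ≤ g a' * B ^ (T - i) := by
        have := Nat.mul_le_mul (hgr a').1 (Nat.one_le_pow (T - i) B hB0)
        omega
      have hu_ub : g a' * B ^ (T - i) + 1 ≤ (k + 1) * B ^ (T - 1) := by
        have e1 : g a' * B ^ (T - i) ≤ k * B ^ (T - 1) :=
          Nat.mul_le_mul (hgr a').2 (Nat.pow_le_pow_right hB0 (by omega))
        have e3 : (k + 1) * B ^ (T - 1) = k * B ^ (T - 1) + B ^ (T - 1) := by ring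
        omega
      have hcle : c ≤ g a' * B ^ (T - i) * B ^ ((T - j') * T) := by
        rw [hceq, TM.cCopy]; exact Nat.sub_le _ _
      rcases lt_trichotomy j' j with hlt | heq | hgt
      · exfalso
        have hc' : g a' * B ^ (T - i) * (B ^ T * B ^ ((T - j' - 1) * T))
            - g a' * B ^ (T - i) * TM.low B T j' ≤ c := by
          rw [hceq, TM.cCopy, hPsplit j' (by omega)]
        have hcond : V + 1 + g a' * B ^ (T - i) ≤ g a' * B ^ (T - i) * B ^ T := by
          have e1 : g a' * B ^ (T - i) * (V + 2) ≤ g a' * B ^ (T - i) * B ^ T :=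
            Nat.mul_le_mul_left _ hvalB
          have e2 : g a' * B ^ (T - i) * (V + 2)
              = g a' * B ^ (T - i) * V + 2 * (g a' * B ^ (T - i)) := by ring
          have e3 : V ≤ g a' * B ^ (T - i) * V := Nat.le_mul_of_pos_left _ hu1
          omega
        have hXP : X ≤ B ^ ((T - j' - 1) * T) := by
          rw [hXdef]
          exact Nat.pow_le_pow_right hB0 (Nat.mul_le_mul_right T (by omega))
        exact absurd hcW (not_le_of_gt
          (coin_gt (B ^ T) (B ^ ((T - j' - 1) * T)) (TM.low B T j') X V
            (g a' * B ^ (T - i)) (g a' * B ^ (T - i)) c hc' (hlo j') hXP hX1 hcond))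
      · subst heq
        exact coin_le_of _ _ X A D Y c hcle hXdef.symm.le (by omega) hDX hY1
      · refine coin_le_of2 _ _ X A D Y (B ^ T) c hcle ?_ (by omega) hXY hA2 hDX
        rw [hYdef]
        exact Nat.pow_le_pow_right hB0 (Nat.mul_le_mul_right T (by omega))
    rcases hc' with ⟨q', am, a', ap, i, j', hi2, hiT1, hj'1, hj'T, hceq⟩ | hc''
    · -- transition coin
      have hiT : i ≤ T := by omega
      have hp1' : 1 ≤ B ^ (T - i - 1) := Nat.one_le_pow _ _ hB0
      have hpi : B ^ (T - i) = B ^ (T - i - 1) * B := by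
        rw [← pow_succ]; congr 1; omega
      have hpi1 : B ^ (T - i + 1) = B ^ (T - i - 1) * B * B := by
        rw [← pow_succ, ← pow_succ]; congr 1; omega
      have hple : B ^ (T - i - 1) * B * B ≤ B ^ (T - 1) := by
        rw [← hpi1]
        exact Nat.pow_le_pow_right hB0 (by omega)
      have hu_lb : B ^ (T - i - 1) * B * B ≤ TM.transUpper f g k B T q' am a' ap i := by
        rw [TM.transUpper, hpi1]
        have e1 : 1 * (B ^ (T - i - 1) * B * B) ≤ g am * (B ^ (T - i - 1) * B * B) :=
          Nat.mul_le_mul_right _ (hgr am).1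
        omega
      have hu_ub : TM.transUpper f g k B T q' am a' ap i + 1 ≤ (k + 1) * B ^ (T - 1) := by
        rw [TM.transUpper, hpi, hpi1]
        have e1 := upper_le B (B ^ (T - i - 1)) k (g am) (f q' * k + g a') (g ap)
          hp1' (hgr am).2 (hdig q' a') (hgB ap)
        have e2 : (k + 1) * (B ^ (T - i - 1) * B * B) ≤ (k + 1) * B ^ (T - 1) :=
          Nat.mul_le_mul_left _ hple
        omega
      have hl_ub : TM.transLower M f g k B T q' am a' ap i
          ≤ B ^ (T - i - 1) * B * B * B := by
        rw [TM.transLower]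
        split
        · rw [TM.transUpper, hpi, hpi1]
          exact threeDigit_le B (B ^ (T - i - 1)) (g am) (f q' * k + g a') (g ap)
            hp1' hB1 (hgB am) (hdig q' a') (hgB ap)
        · dsimp only
          split
          · rw [hpi, hpi1]
            exact threeDigit_le B (B ^ (T - i - 1)) (g am) (g (M.δ q' a').2.1)
              (f (M.δ q' a').1 * k + g ap) hp1' hB1 (hgB am)
              (hgB (M.δ q' a').2.1) (hdig (M.δ q' a').1 ap)
          · rw [hpi, hpi1]
            exact threeDigit_le B (B ^ (T - i - 1)) (f (M.δ q' a').1 * k + g am)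
              (g (M.δ q' a').2.1) (g ap) hp1' hB1 (hdig (M.δ q' a').1 am)
              (hgB (M.δ q' a').2.1) (hgB ap)
      have hcle : c ≤ TM.transUpper f g k B T q' am a' ap i * B ^ ((T - j') * T) := by
        rw [hceq, TM.cTrans]; exact Nat.sub_le _ _
      rcases lt_trichotomy j' j with hlt | heq | hgt
      · exfalso
        have hc' : TM.transUpper f g k B T q' am a' ap i *
              (B ^ T * B ^ ((T - j' - 1) * T))
            - TM.transLower M f g k B T q' am a' ap i * TM.low B T j' ≤ c := by
          rw [hceq, TM.cTrans, hPsplit j' (by omega)]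
        have hcond : V + 1 + TM.transLower M f g k B T q' am a' ap i
            ≤ TM.transUpper f g k B T q' am a' ap i * B ^ T := by
          set p := B ^ (T - i - 1) with hpdef
          have c1 : V + 1 ≤ p * B ^ T := by
            have := Nat.le_mul_of_pos_left (B ^ T) (show 0 < p by omega)
            omega
          have c2 : TM.transLower M f g k B T q' am a' ap i ≤ p * B * B ^ T := by
            calc TM.transLower M f g k B T q' am a' ap i ≤ p * B * B * B := hl_ub
              _ = p * B * (B * B) := by ring
              _ ≤ p * B * B ^ T := Nat.mul_le_mul_left _ hBT2
          have c3 : p * B ^ T + p * B * B ^ T ≤ p * B * B * B ^ T := by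
            have e1 : 1 + B ≤ B * B := by
              have := Nat.mul_le_mul_right B (show 2 ≤ B by omega)
              omega
            calc p * B ^ T + p * B * B ^ T = p * B ^ T * (1 + B) := by ring
              _ ≤ p * B ^ T * (B * B) := Nat.mul_le_mul_left _ e1
              _ = p * B * B * B ^ T := by ring
          have c4 : p * B * B * B ^ T
              ≤ TM.transUpper f g k B T q' am a' ap i * B ^ T :=
            Nat.mul_le_mul_right _ hu_lb
          omega
        have hXP : X ≤ B ^ ((T - j' - 1) * T) := by
          rw [hXdef]
          exact Nat.pow_le_pow_right hB0 (Nat.mul_le_mul_right T (by omega))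
        exact absurd hcW (not_le_of_gt
          (coin_gt (B ^ T) (B ^ ((T - j' - 1) * T)) (TM.low B T j') X V
            (TM.transUpper f g k B T q' am a' ap i)
            (TM.transLower M f g k B T q' am a' ap i) c hc' (hlo j') hXP hX1 hcond))
      · subst heq
        exact coin_le_of _ _ X A D Y c hcle hXdef.symm.le (by omega) hDX hY1
      · refine coin_le_of2 _ _ X A D Y (B ^ T) c hcle ?_ (by omega) hXY hA2 hDX
        rw [hYdef]
        exact Nat.pow_le_pow_right hB0 (Nat.mul_le_mul_right T (by omega))
    · -- left coin
      obtain ⟨q', ap, j', hq', hj'1, hj'T, hceq⟩ := hc''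
      set u := (f q' * k + g M.dollar) * B ^ (T - 1) + g ap * B ^ (T - 2) with hudef
      set l := g M.dollar * B ^ (T - 1) +
        (f (M.δ q' M.dollar).1 * k + g ap) * B ^ (T - 2) with hldef
      have hceq' : c = u * B ^ ((T - j') * T) - l * TM.low B T j' := by
        rw [hceq, TM.cLeft, hudef, hldef]
      have hl1 : l + 1 ≤ B ^ T := by rw [hldef]; exact hlB _ _
      have hu1 : u + B ^ (T - 2) + 1 ≤ B ^ T := by rw [hudef]; exact huB _ _
      have hu_lb : (k + 1) * B ^ (T - 1) ≤ u := by
        rw [hudef]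
        have e1 : k + 1 ≤ f q' * k + g M.dollar := by
          have h2 : 1 * k ≤ f q' * k := Nat.mul_le_mul_right _ (hfr q').1
          have h3 := (hgr M.dollar).1
          omega
        have e2 : (k + 1) * B ^ (T - 1) ≤ (f q' * k + g M.dollar) * B ^ (T - 1) :=
          Nat.mul_le_mul_right _ e1
        omega
      have hcle : c ≤ u * B ^ ((T - j') * T) := by
        rw [hceq']; exact Nat.sub_le _ _
      rcases lt_trichotomy j' j with hlt | heq | hgt
      · exfalso
        have hc' : u * (B ^ T * B ^ ((T - j' - 1) * T)) - l * TM.low B T j' ≤ c := by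
          rw [hceq', hPsplit j' (by omega)]
        have hcond : V + 1 + l ≤ u * B ^ T := by
          have hu2 : 2 ≤ u := by
            have := Nat.mul_le_mul (show 2 ≤ k + 1 by omega) hE1'
            omega
          have e1 : 2 * B ^ T ≤ u * B ^ T := Nat.mul_le_mul_right _ hu2
          omega
        have hXP : X ≤ B ^ ((T - j' - 1) * T) := by
          rw [hXdef]
          exact Nat.pow_le_pow_right hB0 (Nat.mul_le_mul_right T (by omega))
        exact absurd hcW (not_le_of_gt
          (coin_gt (B ^ T) (B ^ ((T - j' - 1) * T)) (TM.low B T j') X V u l c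
            hc' (hlo j') hXP hX1 hcond))
      · subst heq
        have hβB : g ap < B := by have := hgB ap; omega
        have hβ₀B : g (a 2) < B := by have := hgB (a 2); omega
        set α := f q' * k + g M.dollar with hαdef
        set α₀ := f q * k + g M.dollar with hα₀def
        have eu : u = (α * B + g ap) * B ^ (T - 2) := by rw [hudef, hp1]; ring
        have eA : A = (α₀ * B + g (a 2)) * B ^ (T - 2) := by rw [hAdef, hp1]; ring
        rcases lt_trichotomy (α * B + g ap) (α₀ * B + g (a 2)) with hN | hN | hN
        · -- strictly smaller coin
          have e3 : (α * B + g ap + 1) * B ^ (T - 2)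
              ≤ (α₀ * B + g (a 2)) * B ^ (T - 2) := Nat.mul_le_mul_right _ (by omega)
          have e4 : (α * B + g ap + 1) * B ^ (T - 2)
              = (α * B + g ap) * B ^ (T - 2) + B ^ (T - 2) := by ring
          have hu' : u + 1 ≤ A := by omega
          exact coin_le_of u _ X A D Y c hcle hXdef.symm.le hu' hDX hY1
        · -- equal: same coin
          have hαα : α = α₀ := by
            rcases lt_trichotomy α α₀ with h' | h' | h'
            · exfalso
              have e5 : (α + 1) * B ≤ α₀ * B := Nat.mul_le_mul_right _ (by omega)
              have e6 : (α + 1) * B = α * B + B := by ring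
              omega
            · exact h'
            · exfalso
              have e5 : (α₀ + 1) * B ≤ α * B := Nat.mul_le_mul_right _ (by omega)
              have e6 : (α₀ + 1) * B = α₀ * B + B := by ring
              omega
          have hββ : g ap = g (a 2) := by
            rw [hαα] at hN; omega
          have hfqq : f q' = f q := by
            have e7 : f q' * k = f q * k := by
              rw [hαdef, hα₀def] at hαα; omega
            exact Nat.eq_of_mul_eq_mul_right (by omega) e7
          have hqq : q' = q := hfi hfqq
          have hap : ap = a 2 := hgi hββ
          rw [hceq, hqq, hap, hcoin]
        · -- strictly bigger: exceeds W'
          exfalso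
          have e3 : (α₀ * B + g (a 2) + 1) * B ^ (T - 2)
              ≤ (α * B + g ap) * B ^ (T - 2) := Nat.mul_le_mul_right _ (by omega)
          have e4 : (α₀ * B + g (a 2) + 1) * B ^ (T - 2)
              = (α₀ * B + g (a 2)) * B ^ (T - 2) + B ^ (T - 2) := by ring
          have hu' : A + B ^ (T - 2) ≤ u := by omega
          have f1 : (A + B ^ (T - 2)) * X ≤ u * X := Nat.mul_le_mul_right _ hu'
          have f2 : l * Y + Y ≤ X := by
            calc l * Y + Y = (l + 1) * Y := by ring
              _ ≤ B ^ T * Y := Nat.mul_le_mul_right _ hl1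
              _ = X := hXY.symm
          have f3 : (V + 1) * X ≤ (A + B ^ (T - 2)) * X := Nat.mul_le_mul_right _ hval_ub
          have f3e : (V + 1) * X = V * X + X := by ring
          have hcc : c = u * X - l * Y := by rw [hceq', hlowj, ← hXdef]
          omega
      · refine coin_le_of2 u _ X A D Y (B ^ T) c hcle ?_ (by omega) hXY hA2 hDX
        rw [hYdef]
        exact Nat.pow_le_pow_right hB0 (Nat.mul_le_mul_right T (by omega))
  have hGr : IsGreatest {c | c ∈ TM.coinSet M f g k B T ∧ c ≤ V * X}
      (TM.cLeft M f g k B T q (a 2) j) :=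
    ⟨⟨h2, h1⟩, fun c hc => h3 c hc.1 hc.2⟩
  exact ⟨h1, hGr, hGr.csSup_eq⟩
end

section
/- With the above construction, let j ∈ {1,…,T−1}, let 1 ≤ i ≤ T, let a_i,…,a_T ∈ Γ, and let u < B^T be a natural number all of whose base-B digits are at most (s+1)·k. Set W' = (Σ_{r=i}^{T} g(a_r)·B^{T−r})·B^{(T−j)·T} + u·B^{(T−j−1)·T}. Then c_copy(a_i, i, j) ≤ W', and c_copy(a_i, i, j) is the largest coin in 𝒞 not exceeding W'; hence it is the coin selected by the greedy procedure at remaining amount W'. -/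
/-!
Write `P = B ^ T`. A coin with parameter `j'` has the shape
`V * P ^ (T - j') - V' * P ^ (T - j' - 1)` with an upper part `V < P` and a lower part `V' < P`,
while `W' = (S * P + u) * P ^ (T - j - 1)` with `S + 2 ≤ P`, and the copy coin is
`G * (P - 1) * P ^ (T - j - 1)` with `G = g (a i) * B ^ (T - i)`. Hence a coin with `j' < j`
exceeds `W'` and a coin with `j' > j` is below the copy coin. For `j' = j`, all base-`B` digits
are at most `(s + 1) * k ≤ B - 2`, so comparing digit strings shows that the upper part of a coin
is either at most `G` (and the coin is at most the copy coin) or at least `S + 2` (and the coin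
exceeds `W'`). The only borderline case, a larger copy coin in the last cell, is excluded by the
top digit of `u`.
-/

open Finset

theorem mul_pow_add_lt_pow_succ {B d x e : ℕ} (hd : d < B) (hx : x < B ^ e) :
    d * B ^ e + x < B ^ (e + 1) :=
  calc d * B ^ e + x < (d + 1) * B ^ e := by rw [add_one_mul]; omega
    _ ≤ B ^ (e + 1) := by rw [pow_succ']; exact Nat.mul_le_mul_right _ hd

theorem mul_pow_lt_pow_succ {B d e : ℕ} (hd : d < B) : d * B ^ e < B ^ (e + 1) := by
  simpa using mul_pow_add_lt_pow_succ (x := 0) hd (pow_pos (by omega) e)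

theorem two_digits_lt {B d₁ d₀ e : ℕ} (h₁ : d₁ < B) (h₀ : d₀ < B) :
    d₁ * B ^ (e + 1) + d₀ * B ^ e < B ^ (e + 2) :=
  mul_pow_add_lt_pow_succ h₁ (mul_pow_lt_pow_succ h₀)

theorem three_digits_lt {B d₂ d₁ d₀ e : ℕ} (h₂ : d₂ < B) (h₁ : d₁ < B) (h₀ : d₀ < B) :
    d₂ * B ^ (e + 2) + d₁ * B ^ (e + 1) + d₀ * B ^ e < B ^ (e + 3) := by
  rw [add_assoc]; exact mul_pow_add_lt_pow_succ h₂ (two_digits_lt h₁ h₀)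

theorem mul_pow_add_add_two_le {B d x e : ℕ} (hd : d + 2 ≤ B) (hx : x + 2 ≤ B ^ e) :
    d * B ^ e + x + 2 ≤ B ^ (e + 1) :=
  calc d * B ^ e + x + 2 ≤ (d + 1) * B ^ e := by rw [add_one_mul]; omega
    _ ≤ B ^ (e + 1) := by rw [pow_succ']; exact Nat.mul_le_mul_right _ (by omega)

theorem sum_Icc_mul_pow_add_two_le {B : ℕ} {d : ℕ → ℕ} (hd : ∀ r, d r + 2 ≤ B) {i T : ℕ}
    (hi : i ≤ T) : ∑ r ∈ Icc i T, d r * B ^ (T - r) + 2 ≤ B ^ (T - i + 1) := by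
  induction hi using Nat.decreasingInduction with
  | self => simpa using hd T
  | of_succ i hi ih =>
    rw [← add_sum_Ioc_eq_sum_Icc hi.le, ← Icc_add_one_left_eq_Ioc,
      show T - i = T - (i + 1) + 1 by omega]
    exact mul_pow_add_add_two_le (hd i) ih

theorem add_pow_lt_pow_succ_of_digit_add_two_le {B u e : ℕ} (hu : u < B ^ (e + 1))
    (hdigit : u / B ^ e % B + 2 ≤ B) : u + B ^ e < B ^ (e + 1) := by
  have hpos : 0 < B ^ e := pow_pos (by omega) e
  rw [pow_succ] at hu ⊢
  have hq : u / B ^ e < B := Nat.div_lt_of_lt_mul hu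
  rw [Nat.mod_eq_of_lt hq] at hdigit
  have hsplit := Nat.div_add_mod u (B ^ e)
  have hrem := Nat.mod_lt u hpos
  have := Nat.mul_le_mul_left (B ^ e) hdigit
  rw [mul_add] at this
  omega

theorem add_mul_pow_lt_mul_pow_sub {P S u V V' n₀ n : ℕ} (hS : S + 2 ≤ P) (hu : u < P)
    (hn : n₀ < n) (hV : V' + P ≤ V * P + 1) :
    S * P ^ (n₀ + 1) + u * P ^ n₀ < V * P ^ (n + 1) - V' * P ^ n := by
  have hP : 0 < P ^ n₀ := pow_pos (by omega) _
  calc S * P ^ (n₀ + 1) + u * P ^ n₀ = (S * P + u) * P ^ n₀ := by ring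
    _ < (S * P + P) * P ^ n₀ := Nat.mul_lt_mul_of_pos_right (by omega) hP
    _ = (S + 1) * P ^ (n₀ + 1) := by ring
    _ ≤ (P - 1) * P ^ n := Nat.mul_le_mul (by omega) (Nat.pow_le_pow_right (by omega) hn)
    _ ≤ (V * P - V') * P ^ n := Nat.mul_le_mul_right _ (by omega)
    _ = V * P ^ (n + 1) - V' * P ^ n := by rw [Nat.sub_mul, pow_succ', mul_assoc]

theorem mul_pow_le_mul_pow_sub {P G V e n₀ : ℕ} (hG : 1 ≤ G) (hV : V < P) (he : e ≤ n₀) :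
    V * P ^ e ≤ G * P ^ (n₀ + 1) - G * P ^ n₀ :=
  calc V * P ^ e ≤ (P - 1) * P ^ n₀ :=
        Nat.mul_le_mul (by omega) (Nat.pow_le_pow_right (by omega) he)
    _ ≤ G * ((P - 1) * P ^ n₀) := Nat.le_mul_of_pos_left _ hG
    _ = G * P ^ (n₀ + 1) - G * P ^ n₀ := by
      rw [Nat.sub_mul, one_mul, Nat.mul_sub, pow_succ', mul_comm P]

theorem mul_pow_sub_le_of_mul_sub_le {P S u G V V' n : ℕ} (hP : 0 < P)
    (h : V * P - V' ≤ S * P + u → V * P - V' ≤ G * P - G)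
    (hc : V * P ^ (n + 1) - V' * P ^ n ≤ S * P ^ (n + 1) + u * P ^ n) :
    V * P ^ (n + 1) - V' * P ^ n ≤ G * P ^ (n + 1) - G * P ^ n := by
  have hPn : 0 < P ^ n := pow_pos hP n
  have factor : ∀ x y, x * P ^ (n + 1) - y * P ^ n = (x * P - y) * P ^ n := fun x y => by
    rw [Nat.sub_mul, pow_succ', mul_assoc]
  rw [factor, show S * P ^ (n + 1) + u * P ^ n = (S * P + u) * P ^ n by ring] at hc
  rw [factor, factor]
  exact Nat.mul_le_mul_right _ (h (Nat.le_of_mul_le_mul_right hc hPn))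

theorem mul_sub_le_mul_sub_of_le {P G V : ℕ} (h : V ≤ G) : V * P - V ≤ G * P - G := by
  rw [← Nat.mul_sub_one, ← Nat.mul_sub_one]
  exact Nat.mul_le_mul_right _ h

theorem mul_sub_le_mul_sub_of_lt {P G V V' : ℕ} (h : V < G) (hG : G ≤ P) :
    V * P - V' ≤ G * P - G := by
  have := Nat.mul_le_mul_right P (Nat.succ_le_of_lt h)
  rw [Nat.succ_mul] at this
  omega

theorem add_lt_mul_sub_of_add_two_le {P S u V V' : ℕ} (hV : S + 2 ≤ V) (hu : u < P)
    (hV' : V' < P) : S * P + u < V * P - V' := by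
  have := Nat.mul_le_mul_right P hV
  rw [add_mul] at this
  omega

theorem add_lt_mul_sub_of_add_one_le {P S u V V' : ℕ} (hV : S + 1 ≤ V) (h : u + V' < P) :
    S * P + u < V * P - V' := by
  have := Nat.mul_le_mul_right P hV
  rw [add_one_mul] at this
  omega

namespace TM

-- `cCopy`, `cTrans` and `cLeft` all unfold to `levelCoin`.
def levelCoin (B T V V' j : ℕ) : ℕ := V * B ^ ((T - j) * T) - V' * low B T j

theorem levelCoin_le_levelCoin_of_le {B T j j' S u G V V' : ℕ} (hj : j < T) (hS : S + 2 ≤ B ^ T)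
    (hu : u < B ^ T) (hG : 1 ≤ G) (hV : V < B ^ T)
    (hV' : V' + B ^ T ≤ V * B ^ T + 1)
    (hsame : V * B ^ T - V' ≤ S * B ^ T + u → V * B ^ T - V' ≤ G * B ^ T - G)
    (hc : levelCoin B T V V' j' ≤ S * B ^ ((T - j) * T) + u * B ^ ((T - j - 1) * T)) :
    levelCoin B T V V' j' ≤ levelCoin B T G G j := by
  have hpow : ∀ m, B ^ (m * T) = (B ^ T) ^ m := fun m => by rw [mul_comm, pow_mul]
  have hlevel : ∀ m < T, ∀ x y, levelCoin B T x y m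
      = x * (B ^ T) ^ (T - m - 1 + 1) - y * (B ^ T) ^ (T - m - 1) := fun m hm x y => by
    rw [levelCoin, low, if_pos hm, hpow, hpow, Nat.sub_add_cancel (by omega)]
  rw [hlevel j hj]
  rw [hpow, hpow, show T - j = T - j - 1 + 1 by omega] at hc
  rcases lt_trichotomy j' j with hlt | rfl | hgt
  · rw [hlevel j' (by omega)] at hc
    exact absurd hc (not_le.2 (add_mul_pow_lt_mul_pow_sub hS hu (by omega) hV'))
  · rw [hlevel j' hj] at hc ⊢
    exact mul_pow_sub_le_of_mul_sub_le (by omega) hsame hc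
  · calc levelCoin B T V V' j' ≤ V * (B ^ T) ^ (T - j') := by
          rw [levelCoin, hpow]; exact Nat.sub_le _ _
      _ ≤ _ := mul_pow_le_mul_pow_sub hG hV (by omega)

section Tape

variable {Q Γ : Type*} {f : Q → ℕ} {g : Γ → ℕ} {k B T : ℕ}

def tapeValue (g : Γ → ℕ) (B T : ℕ) (a : ℕ → Γ) (i : ℕ) : ℕ :=
  ∑ r ∈ Icc i T, g (a r) * B ^ (T - r)

theorem tapeValue_eq_add {a : ℕ → Γ} {i : ℕ} (hi : i ≤ T) :
    tapeValue g B T a i = g (a i) * B ^ (T - i) + tapeValue g B T a (i + 1) := by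
  rw [tapeValue, tapeValue, Icc_add_one_left_eq_Ioc, ← add_sum_Ioc_eq_sum_Icc hi]

theorem tapeValue_add_two_le (hgB : ∀ a, g a + 2 ≤ B) (a : ℕ → Γ) {i : ℕ} (hi : i ≤ T) :
    tapeValue g B T a i + 2 ≤ B ^ (T - i + 1) :=
  sum_Icc_mul_pow_add_two_le (fun r => hgB (a r)) hi

theorem tapeValue_add_two_le_succ_mul (hgB : ∀ a, g a + 2 ≤ B) (a : ℕ → Γ) {i : ℕ} (hi : i < T) :
    tapeValue g B T a i + 2 ≤ (g (a i) + 1) * B ^ (T - i) := by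
  have := tapeValue_add_two_le hgB a (i := i + 1) hi
  rw [show T - (i + 1) + 1 = T - i by omega] at this
  rw [tapeValue_eq_add hi.le, add_one_mul]
  omega

theorem tapeValue_self (a : ℕ → Γ) : tapeValue g B T a T = g (a T) := by
  simp [tapeValue]

theorem copy_upper_le_or_tapeValue_add_le (hg : ∀ a, 1 ≤ g a) (hgB : ∀ a, g a + 2 ≤ B)
    (a : ℕ → Γ) (a' : Γ) {i i' : ℕ} (hi : i ≤ T) (hi' : i' ≤ T) :
    g a' * B ^ (T - i') ≤ g (a i) * B ^ (T - i) ∨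
      tapeValue g B T a i + 2 ≤ g a' * B ^ (T - i') ∨
      (tapeValue g B T a i + 1 ≤ g a' * B ^ (T - i') ∧ g a' * B ^ (T - i') < B) := by
  have hB : 1 ≤ B := by have := hgB a'; omega
  rcases lt_trichotomy i' i with hlt | rfl | hgt
  · refine Or.inr (Or.inl ?_)
    calc tapeValue g B T a i + 2 ≤ B ^ (T - i + 1) := tapeValue_add_two_le hgB a hi
      _ ≤ B ^ (T - i') := Nat.pow_le_pow_right hB (by omega)
      _ ≤ g a' * B ^ (T - i') := Nat.le_mul_of_pos_left _ (hg a')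
  · by_cases hle : g a' ≤ g (a i')
    · exact Or.inl (Nat.mul_le_mul_right _ hle)
    rcases hi.lt_or_eq with hlt | rfl
    · refine Or.inr (Or.inl ?_)
      calc tapeValue g B T a i' + 2 ≤ (g (a i') + 1) * B ^ (T - i') :=
            tapeValue_add_two_le_succ_mul hgB a hlt
        _ ≤ g a' * B ^ (T - i') := Nat.mul_le_mul_right _ (by omega)
    · have := hgB a'
      simp only [tapeValue_self, Nat.sub_self, pow_zero, mul_one]
      omega
  · refine Or.inl (le_of_lt ?_)
    calc g a' * B ^ (T - i') < B ^ (T - i' + 1) := mul_pow_lt_pow_succ (by have := hgB a'; omega)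
      _ ≤ B ^ (T - i) := Nat.pow_le_pow_right hB (by omega)
      _ ≤ g (a i) * B ^ (T - i) := Nat.le_mul_of_pos_left _ (hg (a i))

theorem transUpper_lt_or_tapeValue_add_two_le (hg : ∀ a, 1 ≤ g a ∧ g a ≤ k)
    (hgB : ∀ a, g a + 2 ≤ B) (hD : ∀ q a, k < f q * k + g a ∧ f q * k + g a < B)
    (a : ℕ → Γ) (q : Q) (am a' ap : Γ) {i i' : ℕ} (hi : i ≤ T) (hi' : i' < T) :
    transUpper f g k B T q am a' ap i' < g (a i) * B ^ (T - i) ∨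
      tapeValue g B T a i + 2 ≤ transUpper f g k B T q am a' ap i' := by
  have hB : 1 ≤ B := by have := hgB am; omega
  obtain ⟨e, he⟩ : ∃ e, T - i' = e + 1 := ⟨T - i' - 1, by omega⟩
  have hupper : transUpper f g k B T q am a' ap i'
      = g am * B ^ (e + 2) + (f q * k + g a') * B ^ (e + 1) + g ap * B ^ e := by
    rw [transUpper, he, show e + 1 - 1 = e by omega]
  have hlow : (f q * k + g a') * B ^ (e + 1) + g ap * B ^ e < B ^ (e + 2) :=
    two_digits_lt (hD q a').2 (by have := hgB ap; omega)
  rw [hupper]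
  rcases lt_trichotomy (i + 1) i' with hlt | rfl | hge
  · refine Or.inl ?_
    calc _ < B ^ (e + 3) := three_digits_lt (by have := hgB am; omega) (hD q a').2
            (by have := hgB ap; omega)
      _ ≤ B ^ (T - i) := Nat.pow_le_pow_right hB (by omega)
      _ ≤ g (a i) * B ^ (T - i) := Nat.le_mul_of_pos_left _ (hg (a i)).1
  · rw [show T - i = e + 2 by omega]
    rcases lt_trichotomy (g am) (g (a i)) with hlt | heq | hgt
    · refine Or.inl ?_
      calc _ < (g am + 1) * B ^ (e + 2) := by rw [add_one_mul]; omega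
        _ ≤ g (a i) * B ^ (e + 2) := Nat.mul_le_mul_right _ hlt
    · refine Or.inr ?_
      have hnext := tapeValue_add_two_le_succ_mul hgB a (i := i + 1) hi'
      rw [show T - (i + 1) = e + 1 by omega] at hnext
      have hmid : (g (a (i + 1)) + 1) * B ^ (e + 1) ≤ (f q * k + g a') * B ^ (e + 1) :=
        Nat.mul_le_mul_right _ (by have := (hg (a (i + 1))).2; have := (hD q a').1; omega)
      rw [tapeValue_eq_add hi, show T - i = e + 2 by omega, heq]
      omega
    · refine Or.inr ?_
      calc tapeValue g B T a i + 2 ≤ (g (a i) + 1) * B ^ (T - i) :=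
            tapeValue_add_two_le_succ_mul hgB a (by omega)
        _ = (g (a i) + 1) * B ^ (e + 2) := by rw [show T - i = e + 2 by omega]
        _ ≤ g am * B ^ (e + 2) := Nat.mul_le_mul_right _ hgt
        _ ≤ _ := by omega
  · refine Or.inr ?_
    calc tapeValue g B T a i + 2 ≤ B ^ (T - i + 1) := tapeValue_add_two_le hgB a hi
      _ ≤ B ^ (e + 2) := Nat.pow_le_pow_right hB (by omega)
      _ ≤ g am * B ^ (e + 2) := Nat.le_mul_of_pos_left _ (hg am).1
      _ ≤ _ := by omega

theorem tapeValue_add_two_le_left_upper (hgB : ∀ a, g a + 2 ≤ B) (a : ℕ → Γ) {D d : ℕ}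
    (hD : g (a 1) < D) {i : ℕ} (hi : 1 ≤ i) (hiT : i ≤ T) (hT : 2 ≤ T) :
    tapeValue g B T a i + 2 ≤ D * B ^ (T - 1) + d * B ^ (T - 2) := by
  have hB : 1 ≤ B := by have := hgB (a 1); omega
  suffices tapeValue g B T a i + 2 ≤ D * B ^ (T - 1) by omega
  rcases hi.eq_or_lt with rfl | hlt
  · calc tapeValue g B T a 1 + 2 ≤ (g (a 1) + 1) * B ^ (T - 1) :=
          tapeValue_add_two_le_succ_mul hgB a (by omega)
      _ ≤ D * B ^ (T - 1) := Nat.mul_le_mul_right _ hD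
  · calc tapeValue g B T a i + 2 ≤ B ^ (T - i + 1) := tapeValue_add_two_le hgB a hiT
      _ ≤ B ^ (T - 1) := Nat.pow_le_pow_right hB (by omega)
      _ ≤ D * B ^ (T - 1) := Nat.le_mul_of_pos_left _ (by omega)

theorem transUpper_lt_pow (hgB : ∀ a, g a + 2 ≤ B)
    (hD : ∀ q a, k < f q * k + g a ∧ f q * k + g a < B) (q : Q) (am a ap : Γ) {i : ℕ}
    (hi : i < T) : transUpper f g k B T q am a ap i < B ^ (T - i + 2) := by
  obtain ⟨e, he⟩ : ∃ e, T - i = e + 1 := ⟨T - i - 1, by omega⟩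
  rw [transUpper, he, show e + 1 - 1 = e by omega]
  exact three_digits_lt (by have := hgB am; omega) (hD q a).2 (by have := hgB ap; omega)

theorem transLower_lt_pow [DecidableEq Q] [DecidableEq Γ] (M : TM Q Γ) (hgB : ∀ a, g a + 2 ≤ B)
    (hD : ∀ q a, k < f q * k + g a ∧ f q * k + g a < B) (q : Q) (am a ap : Γ) {i : ℕ}
    (hi : i < T) : transLower M f g k B T q am a ap i < B ^ (T - i + 2) := by
  obtain ⟨e, he⟩ : ∃ e, T - i = e + 1 := ⟨T - i - 1, by omega⟩
  have hdigit : ∀ b, g b < B := fun b => by have := hgB b; omega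
  unfold transLower
  dsimp only
  split_ifs
  · exact transUpper_lt_pow hgB hD q am a ap hi
  all_goals rw [he, show e + 1 - 1 = e by omega]
  · exact three_digits_lt (hdigit am) (hdigit _) (hD _ ap).2
  · exact three_digits_lt (hD _ am).2 (hdigit _) (hdigit ap)

end Tape

section Coins

variable {Q Γ : Type*} {f : Q → ℕ} {g : Γ → ℕ} {k B T : ℕ}

theorem cCopy_le_tapeValue_mul (a : ℕ → Γ) {i : ℕ} (hiT : i ≤ T) (j u : ℕ) :
    cCopy g B T (a i) i j ≤ tapeValue g B T a i * B ^ ((T - j) * T) + u * B ^ ((T - j - 1) * T) :=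
  calc cCopy g B T (a i) i j ≤ g (a i) * B ^ (T - i) * B ^ ((T - j) * T) := Nat.sub_le _ _
    _ ≤ tapeValue g B T a i * B ^ ((T - j) * T) :=
      Nat.mul_le_mul_right _ (by rw [tapeValue_eq_add hiT]; omega)
    _ ≤ _ := Nat.le_add_right _ _

theorem levelCoin_le_cCopy_of_le (hg : ∀ a, 1 ≤ g a) (hgB : ∀ a, g a + 2 ≤ B) (a : ℕ → Γ)
    {i j j' u V V' : ℕ} (hi : 1 ≤ i) (hiT : i ≤ T) (hj : j < T) (hu : u < B ^ T)
    (hV : V < B ^ T) (hV' : V' + B ^ T ≤ V * B ^ T + 1)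
    (hcases : (V ≤ g (a i) * B ^ (T - i) ∧ V' = V) ∨ V < g (a i) * B ^ (T - i) ∨
      tapeValue g B T a i * B ^ T + u < V * B ^ T - V')
    (hc : levelCoin B T V V' j' ≤
      tapeValue g B T a i * B ^ ((T - j) * T) + u * B ^ ((T - j - 1) * T)) :
    levelCoin B T V V' j' ≤ cCopy g B T (a i) i j := by
  have hB : 1 ≤ B := by have := hgB (a i); omega
  have hS : tapeValue g B T a i + 2 ≤ B ^ T :=
    (tapeValue_add_two_le hgB a hiT).trans (Nat.pow_le_pow_right hB (by omega))
  have hG : 1 ≤ g (a i) * B ^ (T - i) := Nat.mul_pos (hg (a i)) (pow_pos hB _)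
  have hGP : g (a i) * B ^ (T - i) ≤ B ^ T :=
    (mul_pow_lt_pow_succ (by have := hgB (a i); omega)).le.trans
      (Nat.pow_le_pow_right hB (by omega))
  refine levelCoin_le_levelCoin_of_le hj hS hu hG hV hV' ?_ hc
  rcases hcases with ⟨hle, rfl⟩ | hlt | hgt
  · exact fun _ => mul_sub_le_mul_sub_of_le hle
  · exact fun _ => mul_sub_le_mul_sub_of_lt hlt hGP
  · exact fun hle => absurd hle (not_le.2 hgt)

theorem cCopy_le_cCopy_of_le (hg : ∀ a, 1 ≤ g a) (hgB : ∀ a, g a + 2 ≤ B) (a : ℕ → Γ) (a' : Γ)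
    {i i' j j' u : ℕ} (hi : 1 ≤ i) (hiT : i ≤ T) (hi' : 1 ≤ i') (hi'T : i' ≤ T) (hT : 2 ≤ T)
    (hj : j < T) (hu : u + B ^ (T - 1) < B ^ T)
    (hc : cCopy g B T a' i' j' ≤
      tapeValue g B T a i * B ^ ((T - j) * T) + u * B ^ ((T - j - 1) * T)) :
    cCopy g B T a' i' j' ≤ cCopy g B T (a i) i j := by
  have hB : 1 ≤ B := by have := hgB a'; omega
  have hV : 1 ≤ g a' * B ^ (T - i') := Nat.mul_pos (hg a') (pow_pos hB _)
  have hVP : g a' * B ^ (T - i') < B ^ T :=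
    (mul_pow_lt_pow_succ (by have := hgB a'; omega)).trans_le
      (Nat.pow_le_pow_right hB (by omega))
  refine levelCoin_le_cCopy_of_le hg hgB a hi hiT hj (by omega) hVP (by nlinarith) ?_ hc
  rcases copy_upper_le_or_tapeValue_add_le hg hgB a a' hiT hi'T with hle | hgt | ⟨hgt, hlt⟩
  · exact Or.inl ⟨hle, rfl⟩
  · exact Or.inr (Or.inr (add_lt_mul_sub_of_add_two_le hgt (by omega) hVP))
  · have : B ≤ B ^ (T - 1) := Nat.le_self_pow (by omega) B
    exact Or.inr (Or.inr (add_lt_mul_sub_of_add_one_le hgt (by omega)))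

theorem cTrans_le_cCopy_of_le [DecidableEq Q] [DecidableEq Γ] (M : TM Q Γ)
    (hg : ∀ a, 1 ≤ g a ∧ g a ≤ k) (hgB : ∀ a, g a + 2 ≤ B)
    (hD : ∀ q a, k < f q * k + g a ∧ f q * k + g a < B) (a : ℕ → Γ) (q : Q) (am a' ap : Γ)
    {i i' j j' u : ℕ} (hi : 1 ≤ i) (hiT : i ≤ T) (hi' : 2 ≤ i') (hi'T : i' ≤ T - 1) (hj : j < T)
    (hu : u < B ^ T)
    (hc : cTrans M f g k B T q am a' ap i' j' ≤
      tapeValue g B T a i * B ^ ((T - j) * T) + u * B ^ ((T - j - 1) * T)) :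
    cTrans M f g k B T q am a' ap i' j' ≤ cCopy g B T (a i) i j := by
  have hB : 1 ≤ B := by have := hgB am; omega
  have hV : transUpper f g k B T q am a' ap i' < B ^ T :=
    (transUpper_lt_pow hgB hD q am a' ap (by omega)).trans_le (Nat.pow_le_pow_right hB (by omega))
  have hV' : transLower M f g k B T q am a' ap i' < B ^ T :=
    (transLower_lt_pow M hgB hD q am a' ap (by omega)).trans_le
      (Nat.pow_le_pow_right hB (by omega))
  have hV2 : 2 ≤ transUpper f g k B T q am a' ap i' := by
    have := Nat.mul_pos (hg am).1 (pow_pos hB (T - i' + 1))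
    have := Nat.mul_pos (by have := (hD q a').1; omega : 0 < f q * k + g a') (pow_pos hB (T - i'))
    unfold transUpper; omega
  refine levelCoin_le_cCopy_of_le (fun b => (hg b).1) hgB a hi hiT hj hu hV (by nlinarith) ?_ hc
  rcases transUpper_lt_or_tapeValue_add_two_le hg hgB hD a q am a' ap hiT (i' := i') (by omega)
    with hlt | hgt
  · exact Or.inr (Or.inl hlt)
  · exact Or.inr (Or.inr (add_lt_mul_sub_of_add_two_le hgt hu hV'))

theorem cLeft_le_cCopy_of_le (M : TM Q Γ) (hg : ∀ a, 1 ≤ g a ∧ g a ≤ k) (hgB : ∀ a, g a + 2 ≤ B)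
    (hD : ∀ q a, k < f q * k + g a ∧ f q * k + g a < B) (a : ℕ → Γ) (q : Q) (ap : Γ)
    {i j j' u : ℕ} (hi : 1 ≤ i) (hiT : i ≤ T) (hT : 2 ≤ T) (hj : j < T) (hu : u < B ^ T)
    (hc : cLeft M f g k B T q ap j' ≤
      tapeValue g B T a i * B ^ ((T - j) * T) + u * B ^ ((T - j - 1) * T)) :
    cLeft M f g k B T q ap j' ≤ cCopy g B T (a i) i j := by
  have hpow : B ^ T = B ^ (T - 2 + 2) := by rw [Nat.sub_add_cancel hT]
  have hV : (f q * k + g M.dollar) * B ^ (T - 1) + g ap * B ^ (T - 2) < B ^ T := by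
    rw [hpow, show T - 1 = T - 2 + 1 by omega]
    exact two_digits_lt (hD q _).2 (by have := hgB ap; omega)
  have hV' : g M.dollar * B ^ (T - 1) + (f (M.δ q M.dollar).1 * k + g ap) * B ^ (T - 2)
      < B ^ T := by
    rw [hpow, show T - 1 = T - 2 + 1 by omega]
    exact two_digits_lt (by have := hgB M.dollar; omega) (hD _ ap).2
  have hgt := tapeValue_add_two_le_left_upper hgB a (D := f q * k + g M.dollar) (d := g ap)
    (by have := (hg (a 1)).2; have := (hD q M.dollar).1; omega) hi hiT hT
  refine levelCoin_le_cCopy_of_le (fun b => (hg b).1) hgB a hi hiT hj hu hV (by nlinarith) ?_ hc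
  exact Or.inr (Or.inr (add_lt_mul_sub_of_add_two_le hgt hu hV'))

theorem le_cCopy_of_mem_coinSet_of_le [DecidableEq Q] [DecidableEq Γ] (M : TM Q Γ)
    (hg : ∀ a, 1 ≤ g a ∧ g a ≤ k) (hgB : ∀ a, g a + 2 ≤ B)
    (hD : ∀ q a, k < f q * k + g a ∧ f q * k + g a < B) (a : ℕ → Γ) {i j u c : ℕ} (hi : 1 ≤ i)
    (hiT : i ≤ T) (hT : 2 ≤ T) (hj : j < T) (hu : u + B ^ (T - 1) < B ^ T)
    (hc : c ∈ coinSet M f g k B T)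
    (hcW : c ≤ tapeValue g B T a i * B ^ ((T - j) * T) + u * B ^ ((T - j - 1) * T)) :
    c ≤ cCopy g B T (a i) i j := by
  rcases hc with ⟨a', i', j', hi', hi'T, -, -, rfl⟩ | ⟨q, am, a', ap, i', j', hi', hi'T, -, -, rfl⟩ |
    ⟨q, ap, j', -, -, -, rfl⟩
  · exact cCopy_le_cCopy_of_le (fun b => (hg b).1) hgB a a' hi hiT hi' hi'T hT hj hu hcW
  · exact cTrans_le_cCopy_of_le M hg hgB hD a q am a' ap hi hiT hi' hi'T hj (by omega) hcW
  · exact cLeft_le_cCopy_of_le M hg hgB hD a q ap hi hiT hT hj (by omega) hcW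

end Coins

end TM

theorem copy_coin_is_greedy_choice_general
    {Q Γ : Type*} [DecidableEq Q] [DecidableEq Γ]
    (M : TM Q Γ) (f : Q → ℕ) (g : Γ → ℕ) (s k B T : ℕ)
    (hfr : ∀ q, 1 ≤ f q ∧ f q ≤ s) (hgr : ∀ a, 1 ≤ g a ∧ g a ≤ k)
    (hB : (s + 1) * k + 2 ≤ B)
    (j i : ℕ) (hj1 : 1 ≤ j) (hjT : j ≤ T - 1) (hi1 : 1 ≤ i) (hiT : i ≤ T)
    (a : ℕ → Γ) (u : ℕ) (hu : u < B ^ T) (hud : ∀ r, u / B ^ r % B ≤ (s + 1) * k)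
    (W' : ℕ)
    (hW' : W' = (∑ r ∈ Finset.Icc i T, g (a r) * B ^ (T - r)) * B ^ ((T - j) * T)
        + u * B ^ ((T - j - 1) * T)) :
    TM.cCopy g B T (a i) i j ≤ W' ∧
    IsGreatest {c | c ∈ TM.coinSet M f g k B T ∧ c ≤ W'} (TM.cCopy g B T (a i) i j) ∧
    greedyPick (TM.coinSet M f g k B T) W' = TM.cCopy g B T (a i) i j := by
  have hsk : (s + 1) * k = s * k + k := add_one_mul s k
  have hgB : ∀ a, g a + 2 ≤ B := fun a => by have := (hgr a).2; omega
  have hD : ∀ q a, k < f q * k + g a ∧ f q * k + g a < B := fun q a => by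
    have := Nat.le_mul_of_pos_left k (hfr q).1
    have := Nat.mul_le_mul_right k (hfr q).2
    have := hgr a
    omega
  have hutop : u + B ^ (T - 1) < B ^ T := by
    have hT : T - 1 + 1 = T := by omega
    have := add_pow_lt_pow_succ_of_digit_add_two_le (e := T - 1) (by rwa [hT])
      (by have := hud (T - 1); omega)
    rwa [hT] at this
  have hle : TM.cCopy g B T (a i) i j ≤ W' := hW' ▸ TM.cCopy_le_tapeValue_mul (g := g) (B := B) a hiT j u
  have hgreatest :
      IsGreatest {c | c ∈ TM.coinSet M f g k B T ∧ c ≤ W'} (TM.cCopy g B T (a i) i j) :=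
    ⟨⟨Or.inl ⟨a i, i, j, hi1, hiT, hj1, by omega, rfl⟩, hle⟩, fun c hc =>
      TM.le_cCopy_of_mem_coinSet_of_le M hgr hgB hD a hi1 hiT (by omega) (by omega) hutop hc.1
        (hW' ▸ hc.2)⟩
  exact ⟨hle, hgreatest, hgreatest.csSup_eq⟩

/-- Case (2) of the simulation: at a remaining amount whose higher range holds the plain
tape symbols `a_i … a_T` (no state–alphabet pair) and whose lower range holds a partial
update `u < B^T` all of whose base-`B` digits are at most `(s+1)·k`, the copy coin
`c_copy(a_i, i, j)` does not exceed `W'` and is the largest coin of `𝒞` not exceeding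
`W'`; hence it is the coin selected by the greedy procedure. -/
theorem copy_coin_is_greedy_choice
    {Q Γ : Type*} [Fintype Q] [Fintype Γ] [DecidableEq Q] [DecidableEq Γ]
    (M : TM Q Γ) (f : Q → ℕ) (g : Γ → ℕ) (s k B T : ℕ)
    (hs : s = Fintype.card Q) (hk : k = Fintype.card Γ)
    (hfr : ∀ q, 1 ≤ f q ∧ f q ≤ s) (hgr : ∀ a, 1 ≤ g a ∧ g a ≤ k)
    (hfi : Function.Injective f) (hgi : Function.Injective g)
    (hB : (s + 1) * k + 2 ≤ B)
    (hdollar : ∀ q, (M.δ q M.dollar).2.1 = M.dollar ∧ (M.δ q M.dollar).2.2 = true)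
    (j i : ℕ) (hj1 : 1 ≤ j) (hjT : j ≤ T - 1) (hi1 : 1 ≤ i) (hiT : i ≤ T)
    (a : ℕ → Γ) (u : ℕ) (hu : u < B ^ T) (hud : ∀ r, u / B ^ r % B ≤ (s + 1) * k)
    (W' : ℕ)
    (hW' : W' = (∑ r ∈ Finset.Icc i T, g (a r) * B ^ (T - r)) * B ^ ((T - j) * T)
        + u * B ^ ((T - j - 1) * T)) :
    TM.cCopy g B T (a i) i j ≤ W' ∧
    IsGreatest {c | c ∈ TM.coinSet M f g k B T ∧ c ≤ W'} (TM.cCopy g B T (a i) i j) ∧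
    greedyPick (TM.coinSet M f g k B T) W' = TM.cCopy g B T (a i) i j :=
  copy_coin_is_greedy_choice_general M f g s k B T hfr hgr hB j i hj1 hjT hi1 hiT a u hu hud W' hW'
end
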